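/- Let μ ∈ Λ(ℤ_p^×) be a measure such that ∫_{ℤ_p^×} x^k dμ = 0 for all integers k > 0. Then μ = 0. Moreover, if ∫_{ℤ_p^×} x^k dμ ≠ 0 for all k > 0, then μ is not a zero divisor in Λ(ℤ_p^×). -/

import Mathlib

variable (p : ℕ) [Fact p.Prime]

/-- The function `x ↦ x^k` as a continuous map `ℤ_p^× → ℤ_p`. -/
noncomputable def powUnitsC (k : ℕ) : C((ℤ_[p])ˣ, ℤ_[p]) :=
  ⟨fun x => (x : ℤ_[p]) ^ k, (Units.continuous_val.pow k)⟩

/-- Left multiplication by a unit, as a continuous map `ℤ_p^× → ℤ_p^×`. -/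
noncomputable def mulUnitsC (x : (ℤ_[p])ˣ) : C((ℤ_[p])ˣ, (ℤ_[p])ˣ) :=
  ⟨fun y => x * y, by continuity⟩

/-!
Extending a continuous function on `ℤ_p^×` to `ℤ_p` through a continuous retraction and applying
Mahler's theorem, every continuous function on `ℤ_p^×` is a uniform limit of `ℤ_p`-combinations of
the binomial functions `x ↦ (x choose n)`. Since `n! (x choose n)` is an integer polynomial in `x`,
a measure is determined by its values on all monomials `x^k`; and the value on `x^0 = 1` is a limit
of values on positive powers, because `x^φ(p^m) ≡ 1 mod p^m` on units.
For the second statement, `x ↦ x^k` is multiplicative, so `(μ * λ)(x^k) = μ(x^k) λ(x^k)`.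
-/

open Filter Finset Topology

lemma Ring.factorial_nsmul_choose_eq_sum {R : Type*} [Ring R] [BinomialRing R] (x : R) (n : ℕ) :
    n.factorial • Ring.choose x n = ∑ k ∈ range (n + 1), (descPochhammer ℤ n).coeff k • x ^ k := by
  rw [← Ring.descPochhammer_eq_factorial_smul_choose, Polynomial.smeval_eq_sum]
  exact Polynomial.sum_over_range' _ (fun k => by simp [Polynomial.smul_pow]) _
    (by rw [descPochhammer_natDegree]; omega)

namespace PadicInt

variable {p}

lemma isClopen_setOf_isUnit : IsClopen {x : ℤ_[p] | IsUnit x} := by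
  refine ⟨?_, Units.isOpenEmbedding_val.isOpen_range⟩
  simp only [isUnit_iff]
  exact isClosed_eq continuous_norm continuous_const

instance : CompactSpace ℤ_[p]ˣ :=
  IsClosedEmbedding.compactSpace (f := Units.val)
    ⟨Units.isOpenEmbedding_val.isEmbedding, isClopen_setOf_isUnit.isClosed⟩

open Classical in
noncomputable def unitsRetraction : C(ℤ_[p], ℤ_[p]ˣ) where
  toFun x := if h : IsUnit x then h.unit else 1
  continuous_toFun := by
    rw [Units.isOpenEmbedding_val.isEmbedding.continuous_iff]
    have hval : (Units.val ∘ fun x : ℤ_[p] => if h : IsUnit x then h.unit else 1) =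
        fun x => if IsUnit x then x else 1 := by
      ext x; by_cases h : IsUnit x <;> simp [h]
    rw [hval]
    refine continuous_if (fun a ha => ?_) continuousOn_id continuousOn_const
    rw [isClopen_setOf_isUnit.frontier_eq] at ha
    exact ha.elim

@[simp]
lemma unitsRetraction_val (u : ℤ_[p]ˣ) : unitsRetraction (u : ℤ_[p]) = u := by
  simp [unitsRetraction]

noncomputable def unitsVal : C(ℤ_[p]ˣ, ℤ_[p]) := ⟨Units.val, Units.continuous_val⟩

noncomputable def unitsChoose (n : ℕ) : C(ℤ_[p]ˣ, ℤ_[p]) := (mahler n).comp unitsVal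

lemma mahlerTerm_eq_smul_mahler (a : ℤ_[p]) (n : ℕ) : mahlerTerm a n = a • mahler n := by
  ext x
  simp [mahlerTerm_apply, mul_comm]

variable {M : Type*} [AddCommGroup M] [Module ℤ_[p] M] [TopologicalSpace M]

lemma eq_zero_of_apply_unitsChoose_eq_zero [T2Space M] (μ : C(ℤ_[p]ˣ, ℤ_[p]) →L[ℤ_[p]] M)
    (h : ∀ n, μ (unitsChoose n) = 0) : μ = 0 := by
  refine ContinuousLinearMap.ext fun f => ?_
  let restrict : C(ℤ_[p], ℤ_[p]) →+ M :=
    (μ : C(ℤ_[p]ˣ, ℤ_[p]) →+ M).comp (ContinuousMap.compAddMonoidHom' unitsVal)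
  have hf : restrict (f.comp unitsRetraction) = μ f :=
    congrArg μ (ContinuousMap.ext fun u => by simp [unitsVal])
  have hterm (a : ℤ_[p]) (n : ℕ) : restrict (mahlerTerm a n) = a • μ (unitsChoose n) := by
    simp [restrict, mahlerTerm_eq_smul_mahler, unitsChoose]
  have hsum := (hasSum_mahler (f.comp unitsRetraction)).map restrict
    (μ.continuous.comp (ContinuousMap.continuous_precomp _))
  simp only [hf, Function.comp_def, hterm, h, smul_zero] at hsum
  exact hsum.unique hasSum_zero

lemma factorial_smul_unitsChoose (n : ℕ) :
    (n.factorial : ℤ_[p]) • unitsChoose n =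
      ∑ k ∈ range (n + 1), (descPochhammer ℤ n).coeff k • powUnitsC p k := by
  ext u
  simpa [unitsChoose, unitsVal, powUnitsC, mahler_apply, nsmul_eq_mul]
    using Ring.factorial_nsmul_choose_eq_sum (u : ℤ_[p]) n

lemma norm_pow_totient_sub_one_le (u : ℤ_[p]ˣ) (m : ℕ) :
    ‖(u : ℤ_[p]) ^ (p ^ m).totient - 1‖ ≤ (p : ℝ) ^ (-(m : ℤ)) := by
  rw [norm_le_pow_iff_mem_span_pow, ← ker_toZModPow, RingHom.mem_ker, map_sub, map_one,
    sub_eq_zero, map_pow]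
  exact congrArg Units.val (ZMod.pow_totient (Units.map (toZModPow m).toMonoidHom u))

lemma tendsto_powUnitsC_totient :
    Tendsto (fun m => powUnitsC p (p ^ m).totient) atTop (𝓝 (powUnitsC p 0)) := by
  rw [tendsto_iff_norm_sub_tendsto_zero]
  have hbound (m : ℕ) :
      ‖powUnitsC p (p ^ m).totient - powUnitsC p 0‖ ≤ (p : ℝ) ^ (-(m : ℤ)) :=
    (ContinuousMap.norm_le _ (zpow_nonneg p.cast_nonneg _)).mpr fun u => by
      simpa [powUnitsC] using norm_pow_totient_sub_one_le u m
  refine squeeze_zero (fun _ => norm_nonneg _) hbound ?_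
  simpa only [zpow_neg, zpow_natCast, inv_pow] using
    tendsto_pow_atTop_nhds_zero_of_lt_one (inv_nonneg.mpr (p.cast_nonneg : (0 : ℝ) ≤ p))
      (inv_lt_one_of_one_lt₀ (Nat.one_lt_cast.mpr (Fact.out : p.Prime).one_lt))

lemma apply_powUnitsC_zero_eq_zero [T2Space M] (μ : C(ℤ_[p]ˣ, ℤ_[p]) →L[ℤ_[p]] M)
    (h : ∀ k, 0 < k → μ (powUnitsC p k) = 0) : μ (powUnitsC p 0) = 0 := by
  refine tendsto_nhds_unique ((μ.continuous.tendsto _).comp tendsto_powUnitsC_totient) ?_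
  refine tendsto_const_nhds.congr fun m => (h _ ?_).symm
  exact Nat.totient_pos.mpr (pow_pos (Fact.out : p.Prime).pos m)

lemma apply_unitsChoose_eq_zero [Module.IsTorsionFree ℤ_[p] M]
    (μ : C(ℤ_[p]ˣ, ℤ_[p]) →L[ℤ_[p]] M) (h : ∀ k, μ (powUnitsC p k) = 0) (n : ℕ) :
    μ (unitsChoose n) = 0 := by
  have hn := congrArg μ (factorial_smul_unitsChoose n)
  simp only [map_smul, map_sum, map_zsmul, h, zsmul_zero, sum_const_zero] at hn
  exact (smul_eq_zero.mp hn).resolve_left (Nat.cast_ne_zero.mpr n.factorial_ne_zero)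

lemma eq_zero_of_moments [T2Space M] [Module.IsTorsionFree ℤ_[p] M]
    (μ : C(ℤ_[p]ˣ, ℤ_[p]) →L[ℤ_[p]] M) (h : ∀ k, 0 < k → μ (powUnitsC p k) = 0) : μ = 0 := by
  have h' (k : ℕ) : μ (powUnitsC p k) = 0 := by
    rcases k.eq_zero_or_pos with rfl | hk
    exacts [apply_powUnitsC_zero_eq_zero μ h, h k hk]
  exact eq_zero_of_apply_unitsChoose_eq_zero μ (apply_unitsChoose_eq_zero μ h')

lemma powUnitsC_comp_mulUnitsC (k : ℕ) (x : ℤ_[p]ˣ) :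
    (powUnitsC p k).comp (mulUnitsC p x) = (x : ℤ_[p]) ^ k • powUnitsC p k := by
  ext y
  simp [powUnitsC, mulUnitsC, mul_pow]

end PadicInt

/-- **Measures on `ℤ_p^×` are determined by the integrals of `x^k`, `k > 0`.**
Let `μ ∈ Λ(ℤ_p^×)` (a `ℤ_p`-valued measure on `ℤ_p^×`).  If `∫ x^k dμ = 0` for all `k > 0`
then `μ = 0`.  Moreover, if `∫ x^k dμ ≠ 0` for all `k > 0`, then `μ` is not a zero divisor
for the convolution product: if `ν` is the convolution `μ * λ` (characterized by
`ν(f) = ∫ (∫ f(xy) dλ(y)) dμ(x)`) and `ν = 0`, then `λ = 0`. -/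
theorem measure_determined_by_moments (μ : C((ℤ_[p])ˣ, ℤ_[p]) →L[ℤ_[p]] ℤ_[p]) :
    ((∀ k : ℕ, 0 < k → μ (powUnitsC p k) = 0) → μ = 0) ∧
    ((∀ k : ℕ, 0 < k → μ (powUnitsC p k) ≠ 0) →
      ∀ lam ν : C((ℤ_[p])ˣ, ℤ_[p]) →L[ℤ_[p]] ℤ_[p],
        (∀ (f g : C((ℤ_[p])ˣ, ℤ_[p])),
          (∀ x : (ℤ_[p])ˣ, g x = lam (f.comp (mulUnitsC p x))) → ν f = μ g) →
        ν = 0 → lam = 0) := by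
  refine ⟨PadicInt.eq_zero_of_moments μ, fun hμ lam ν hconv hν =>
    PadicInt.eq_zero_of_moments lam fun k hk => ?_⟩
  have hνk := hconv (powUnitsC p k) (lam (powUnitsC p k) • powUnitsC p k) fun x => by
    rw [PadicInt.powUnitsC_comp_mulUnitsC, map_smul, ContinuousMap.smul_apply, smul_eq_mul,
      smul_eq_mul, mul_comm]
    rfl
  rw [hν, map_smul, zero_apply, smul_eq_mul, eq_comm] at hνk
  exact (mul_eq_zero.mp hνk).resolve_right (hμ k hk)
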